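/- arXiv:1705.10028 — 6 statements merged into one kernel-verified Lean document; each statement's English description precedes it below -/
import Mathlib

section
/- If k has characteristic p (a prime), then the k-algebra homomorphism from k[y_0, y_1, y_2, ...]/(y_0^p, y_1^p, ...) to the divided power algebra D sending y_i to x^[p^i] is an isomorphism of k-algebras. -/
/-!
A monomial `∏ yᵢ ^ eᵢ` with all `eᵢ < p` is sent to `(∏ eᵢ!) • x^[∑ eᵢ pⁱ]`. Indeed, by Lucas's
theorem `x^[pⁱ] ^ d = d! • x^[d pⁱ]`, and multiplying `x^[a] x^[b]` with `a < pʲ` and `pʲ ∣ b`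
involves the binomial coefficient `(a + b).choose a ≡ 1 [MOD p]`. The factors `eᵢ!` are units for
`eᵢ < p`, and base-`p` expansion is a bijection between such exponent vectors and `ℕ`, so the
reduced monomials, which span the quotient, are sent to unit multiples of the basis vectors
`x^[n]`, each reached exactly once.
-/

open Finset MvPolynomial
open scoped Nat

namespace Nat

theorem sum_range_mul_pow_lt {p N : ℕ} {d : ℕ → ℕ} (hd : ∀ i < N, d i < p) :
    ∑ i ∈ range N, d i * p ^ i < p ^ N := by
  simpa [finFunctionFinEquiv_apply, Fin.sum_univ_eq_sum_range (fun i => d i * p ^ i)] using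
    (finFunctionFinEquiv (fun i : Fin N => (⟨d i, hd i i.2⟩ : Fin p))).2

theorem sum_range_mul_pow_div_pow_mod {p N : ℕ} {d : ℕ → ℕ} (hd : ∀ i < N, d i < p) {i : ℕ}
    (hi : i < N) : (∑ j ∈ range N, d j * p ^ j) / p ^ i % p = d i := by
  have h := finFunctionFinEquiv_symm_apply_val
    (finFunctionFinEquiv fun j : Fin N => (⟨d j, hd j j.2⟩ : Fin p)) ⟨i, hi⟩
  rwa [Equiv.symm_apply_apply, finFunctionFinEquiv_apply,
    Fin.sum_univ_eq_sum_range (fun j => d j * p ^ j), eq_comm] at h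

theorem sum_range_div_pow_mod_mul_pow {p N n : ℕ} (hn : n < p ^ N) :
    ∑ i ∈ range N, n / p ^ i % p * p ^ i = n := by
  have h := congrArg Fin.val (finFunctionFinEquiv.apply_symm_apply (⟨n, hn⟩ : Fin (p ^ N)))
  simp only [finFunctionFinEquiv_apply, finFunctionFinEquiv_symm_apply_val] at h
  rwa [Fin.sum_univ_eq_sum_range (fun i => n / p ^ i % p * p ^ i)] at h

theorem choose_add_pow_mul_modEq_one {p : ℕ} [hp : Fact p.Prime] :
    ∀ {j T : ℕ} (c : ℕ), T < p ^ j → (T + p ^ j * c).choose T ≡ 1 [MOD p]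
  | 0, T, c, hT => by simp [Nat.lt_one_iff.mp (by simpa using hT), Nat.ModEq.refl]
  | j + 1, T, c, hT => by
    have hmod : (T + p ^ (j + 1) * c) % p = T % p := by
      rw [pow_succ', mul_assoc, Nat.add_mul_mod_self_left]
    have hdiv : (T + p ^ (j + 1) * c) / p = T / p + p ^ j * c := by
      rw [pow_succ', mul_assoc, Nat.add_mul_div_left _ _ hp.out.pos]
    have hlt : T / p < p ^ j := Nat.div_lt_of_lt_mul (by rwa [← pow_succ'])
    have lucas := Choose.choose_modEq_choose_mod_mul_choose_div_nat
      (n := T + p ^ (j + 1) * c) (k := T) (p := p)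
    rw [hmod, hdiv, Nat.choose_self, one_mul] at lucas
    exact lucas.trans (choose_add_pow_mul_modEq_one c hlt)

end Nat

theorem Finsupp.weight_pow_eq_sum_range {p N : ℕ} {e : ℕ →₀ ℕ} (hN : e.support ⊆ range N) :
    weight (p ^ ·) e = ∑ i ∈ range N, e i * p ^ i := by
  rw [weight_apply, Finsupp.sum_of_support_subset e hN (fun i c => c • p ^ i)
    (fun _ _ => zero_smul ℕ _)]
  rfl

theorem Nat.weight_toFinsupp_digits {p : ℕ} (hp : 1 < p) (n : ℕ) :
    Finsupp.weight (p ^ ·) (p.digits n).toFinsupp = n := by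
  rw [Finsupp.weight_pow_eq_sum_range (List.toFinsupp_support_subset _)]
  conv_rhs => rw [← sum_range_div_pow_mod_mul_pow (lt_base_pow_length_digits hp (m := n))]
  refine sum_congr rfl fun i _ => ?_
  rw [List.toFinsupp_apply, getD_digits _ _ hp]

theorem Nat.toFinsupp_digits_weight {p : ℕ} (hp : 1 < p) {e : ℕ →₀ ℕ} (he : ∀ i, e i < p) :
    (p.digits (Finsupp.weight (p ^ ·) e)).toFinsupp = e := by
  ext i
  obtain ⟨N, hN⟩ := exists_nat_subset_range (insert i e.support)
  rw [List.toFinsupp_apply, getD_digits _ _ hp,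
    Finsupp.weight_pow_eq_sum_range ((subset_insert _ _).trans hN),
    sum_range_mul_pow_div_pow_mod (fun j _ => he j) (mem_range.mp (hN (mem_insert_self _ _)))]

theorem MvPolynomial.monomial_mem_span_X_pow {σ R : Type*} [CommSemiring R] {n : ℕ}
    {e : σ →₀ ℕ} {i : σ} (hi : n ≤ e i) (c : R) :
    monomial e c ∈ Ideal.span (Set.range fun i : σ => (X i : MvPolynomial σ R) ^ n) := by
  have hsplit : monomial e c = X i ^ n * monomial (e - Finsupp.single i n) c := by
    rw [X_pow_eq_monomial, monomial_mul, one_mul,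
      add_tsub_cancel_of_le (Finsupp.single_le_iff.mpr hi)]
  rw [hsplit]
  exact Ideal.mul_mem_right _ _ (Ideal.subset_span ⟨i, rfl⟩)

theorem isUnit_finsuppProd_factorial {p : ℕ} [Fact p.Prime] (k : Type*) [CommRing k] [CharP k p]
    {ι : Type*} {e : ι →₀ ℕ} (he : ∀ i, e i < p) : IsUnit (e.prod fun _ d => (d ! : k)) :=
  Finset.prod_induction _ IsUnit (fun _ _ => IsUnit.mul) isUnit_one fun i _ =>
    (IsUnit.natCast_factorial_iff_of_charP p).mpr (he i)

structure IsDividedPowerFamily (k : Type*) {D : Type*} [CommSemiring k] [Semiring D]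
    [Module k D] (b : ℕ → D) : Prop where
  zero : b 0 = 1
  mul : ∀ n m : ℕ, b n * b m = ((n + m).choose n : k) • b (n + m)

namespace IsDividedPowerFamily

variable {p : ℕ} [Fact p.Prime] {k D : Type*} [CommSemiring k] [CharP k p] [CommSemiring D]
  [Algebra k D] {b : ℕ → D} (hb : IsDividedPowerFamily k b)
include hb

theorem pow_prime_pow (i d : ℕ) : b (p ^ i) ^ d = (d ! : k) • b (d * p ^ i) := by
  induction d with
  | zero => simp [hb.zero]
  | succ d ih =>
    have hchoose : ((p ^ i + d * p ^ i).choose (p ^ i) : k) = (d + 1 : ℕ) := by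
      refine CharP.natCast_eq_natCast' k p ?_
      have := Choose.choose_pow_mul_pow_mul_modEq_choose_nat (p := p) (k := i) (a := d + 1) (b := 1)
      rwa [mul_one, Nat.choose_one_right, mul_add_one, add_comm, mul_comm] at this
    rw [pow_succ', ih, mul_smul_comm, hb.mul, hchoose, smul_smul, Nat.factorial_succ,
      Nat.cast_mul, add_one_mul, add_comm (d * p ^ i), mul_comm]

theorem prod_range_digits {N : ℕ} {d : ℕ → ℕ} (hd : ∀ i < N, d i < p) :
    ∏ i ∈ range N, b (d i * p ^ i) = b (∑ i ∈ range N, d i * p ^ i) := by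
  induction N with
  | zero => simp [hb.zero]
  | succ N ih =>
    have hlt := Nat.sum_range_mul_pow_lt (N := N) fun i hi => hd i (by omega)
    rw [prod_range_succ, sum_range_succ, ih fun i hi => hd i (by omega), hb.mul, mul_comm (d N),
      CharP.natCast_eq_natCast' k p (Nat.choose_add_pow_mul_modEq_one _ hlt), Nat.cast_one,
      one_smul]

theorem finsuppProd_pow {e : ℕ →₀ ℕ} (he : ∀ i, e i < p) :
    (e.prod fun i d => b (p ^ i) ^ d) =
      (e.prod fun _ d => (d ! : k)) • b (Finsupp.weight (p ^ ·) e) := by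
  obtain ⟨N, hN⟩ := exists_nat_subset_range e.support
  rw [Finsupp.prod_of_support_subset e hN _ (by simp), Finsupp.prod_of_support_subset e hN _
    (by simp), Finsupp.weight_pow_eq_sum_range hN, ← hb.prod_range_digits fun i _ => he i,
    ← prod_smul]
  exact prod_congr rfl fun i _ => hb.pow_prime_pow i (e i)

end IsDividedPowerFamily

section TruncatedPolynomial

variable {p : ℕ} {k D : Type*} [CommRing k] [CommRing D] [Algebra k D]

variable (p) in
noncomputable def dividedPowerInverse (I : Ideal (MvPolynomial ℕ k)) (B : Module.Basis ℕ k D) :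
    D →ₗ[k] MvPolynomial ℕ k ⧸ I :=
  B.constr k fun n => Ring.inverse ((p.digits n).toFinsupp.prod fun _ d => (d ! : k)) •
    Ideal.Quotient.mk I (monomial (p.digits n).toFinsupp 1)

variable [Fact p.Prime] [CharP k p]

theorem IsDividedPowerFamily.map_mk_monomial {b : ℕ → D} (hb : IsDividedPowerFamily k b)
    {I : Ideal (MvPolynomial ℕ k)} (ψ : (MvPolynomial ℕ k ⧸ I) →ₐ[k] D)
    (hψ : ∀ i, ψ (Ideal.Quotient.mk I (X i)) = b (p ^ i)) {e : ℕ →₀ ℕ} (he : ∀ i, e i < p) :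
    ψ (Ideal.Quotient.mk I (monomial e 1)) =
      (e.prod fun _ d => (d ! : k)) • b (Finsupp.weight (p ^ ·) e) := by
  rw [← prod_X_pow_eq_monomial, map_prod, map_prod]
  simp_rw [map_pow, hψ]
  exact hb.finsuppProd_pow he

variable {B : Module.Basis ℕ k D} (hB : IsDividedPowerFamily k B)
  {I : Ideal (MvPolynomial ℕ k)} (ψ : (MvPolynomial ℕ k ⧸ I) →ₐ[k] D)
  (hψ : ∀ i, ψ (Ideal.Quotient.mk I (X i)) = B (p ^ i))
include hB hψ

theorem map_dividedPowerInverse (d : D) : ψ (dividedPowerInverse p I B d) = d := by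
  have hp := (Fact.out : p.Prime).one_lt
  suffices ψ.toLinearMap ∘ₗ dividedPowerInverse p I B = LinearMap.id from
    LinearMap.congr_fun this d
  refine B.ext fun n => ?_
  have hdigits : ∀ i, (p.digits n).toFinsupp i < p := fun i => by
    rw [List.toFinsupp_apply, Nat.getD_digits _ _ hp]
    exact Nat.mod_lt _ (by omega)
  simp only [LinearMap.comp_apply, dividedPowerInverse, Module.Basis.constr_basis,
    AlgHom.toLinearMap_apply, map_smul, hB.map_mk_monomial ψ hψ hdigits,
    Nat.weight_toFinsupp_digits hp, smul_smul,
    Ring.inverse_mul_cancel _ (isUnit_finsuppProd_factorial k hdigits), one_smul,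
    LinearMap.id_apply]

theorem dividedPowerInverse_map_mk (hI : I = Ideal.span (Set.range fun i : ℕ => (X i) ^ p))
    (r : MvPolynomial ℕ k) :
    dividedPowerInverse p I B (ψ (Ideal.Quotient.mk I r)) = Ideal.Quotient.mk I r := by
  have hp := (Fact.out : p.Prime).one_lt
  induction r using MvPolynomial.induction_on' with
  | add q r hq hr => simp only [map_add, hq, hr]
  | monomial e c =>
    by_cases he : ∀ i, e i < p
    · have hmk : Ideal.Quotient.mk I (monomial e c) = c • Ideal.Quotient.mk I (monomial e 1) := by
        rw [← Ideal.Quotient.mkₐ_eq_mk k, ← map_smul, smul_monomial, smul_eq_mul, mul_one]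
      rw [hmk, map_smul, map_smul, hB.map_mk_monomial ψ hψ he, map_smul, dividedPowerInverse,
        Module.Basis.constr_basis, Nat.toFinsupp_digits_weight hp he, smul_smul _ (Ring.inverse _),
        Ring.mul_inverse_cancel _ (isUnit_finsuppProd_factorial k he), one_smul]
    · push Not at he
      obtain ⟨i, hi⟩ := he
      rw [Ideal.Quotient.eq_zero_iff_mem.mpr (hI ▸ monomial_mem_span_X_pow hi c), map_zero,
        map_zero]

end TruncatedPolynomial

/-- If `k` has characteristic `p`, the `k`-algebra homomorphism
`k[y_0, y_1, ...]/(y_0^p, y_1^p, ...) → D` sending `y_i` to `x^[p^i]` is an isomorphism,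
where `D` is the divided power algebra over `k` in one variable. -/
theorem stmt1 (p : ℕ) (hp : p.Prime) (k D : Type*) [CommRing k] [CommRing D]
    [Algebra k D] [CharP k p]
    (B : Module.Basis ℕ k D) (hone : B 0 = 1)
    (hmul : ∀ n m : ℕ, B n * B m = ((n + m).choose n : k) • B (n + m))
    (J : Ideal (MvPolynomial ℕ k))
    (hJ : J = Ideal.span (Set.range fun i : ℕ => (MvPolynomial.X i) ^ p))
    (ψ : (MvPolynomial ℕ k ⧸ J) →ₐ[k] D)
    (hψ : ∀ i : ℕ, ψ (Ideal.Quotient.mk J (MvPolynomial.X i)) = B (p ^ i)) :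
    Function.Bijective ψ := by
  have : Fact p.Prime := ⟨hp⟩
  have hB : IsDividedPowerFamily k B := ⟨hone, hmul⟩
  refine Function.bijective_iff_has_inverse.mpr
    ⟨dividedPowerInverse p J B, fun x => ?_, map_dividedPowerInverse hB ψ hψ⟩
  obtain ⟨r, rfl⟩ := Ideal.Quotient.mk_surjective x
  exact dividedPowerInverse_map_mk hB ψ hψ hJ r
end

section
/- Let M be a graded module over the divided power algebra D, and suppose M admits a connection ∇ : M → M[1] (a k-linear map satisfying ∇(fm) = f∇(m) + d(f)m). Then the map Φ : M → D ⊗_k (M/D_+M) defined by Φ(m) = sum over n ≥ 0 of x^[n] ⊗ (∇^n m)_0 is an isomorphism of D-modules, where (m')_0 denotes the image of m' in M/D_+M. -/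
/-!
`P m = ∑ⱼ (-1)ʲ x^[j] ∇ʲ m` is a projection of `M` onto the horizontal elements `ker ∇`: the sum
telescopes under `∇`, `P m ≡ m` modulo `D₊M`, and `P` kills `D₊M` because
`∑_{a+b=t} (-1)ᵃ x^[a] x^[b] = 0` for `t > 0` (that is, `exp(-x) exp(x) = 1` in `D`). So `P`
descends to a horizontal section `σ` of `M → M/D₊M`, and `Ψ (f ⊗ q) = f σ(q)` inverts `Φ`: the
Taylor formula `m = ∑ₙ x^[n] P(∇ⁿ m)` says `Ψ ∘ Φ = id`, and `Ψ` is injective because applying `P`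
and `∇` alternately to a relation `∑ₙ x^[n] vₙ = 0` with horizontal `vₙ` kills every `vₙ`.
-/

open scoped TensorProduct
open Finset

theorem Finset.sum_range_sum_antidiagonal_eq_sum_range_sum_range {M : Type*} [AddCommMonoid M]
    {N : ℕ} {f : ℕ → ℕ → M} (hf : ∀ a b, N ≤ a + b → f a b = 0) :
    ∑ t ∈ range N, ∑ p ∈ antidiagonal t, f p.1 p.2 = ∑ a ∈ range N, ∑ b ∈ range N, f a b := by
  simp_rw [Nat.sum_antidiagonal_eq_sum_range_succ f, sum_range_diag_flip]
  refine sum_congr rfl fun a _ => sum_subset (range_subset_range.2 (N.sub_le a)) fun b _ hb => ?_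
  exact hf a b (by simp only [mem_range] at hb; omega)

theorem TensorProduct.exists_eq_sum_range_tmul {k D Q : Type*} [CommRing k] [AddCommGroup D]
    [Module k D] [AddCommGroup Q] [Module k Q] (B : Module.Basis ℕ k D) (x : D ⊗[k] Q) :
    ∃ (N : ℕ) (q : ℕ → Q), x = ∑ n ∈ range N, B n ⊗ₜ q n := by
  obtain ⟨c, rfl⟩ := TensorProduct.eq_repr_basis_left B x
  refine ⟨c.support.sup id + 1, c, Finsupp.sum_of_support_subset _ (fun n hn => ?_) _ (by simp)⟩
  exact mem_range.2 (Nat.lt_succ_of_le (le_sup (f := id) hn))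

namespace DividedPowerConnection

variable {k D M : Type*} [CommRing k] [CommRing D] [AddCommGroup M] [Module D M] [Module k M]
  {B : ℕ → D} {nabla : M →ₗ[k] M}

theorem sum_range_neg_one_pow_smul_eq {m : M} {N N' : ℕ}
    (hN : ∀ n ≥ N, (nabla ^ n) m = 0) (hN' : ∀ n ≥ N', (nabla ^ n) m = 0) :
    ∑ j ∈ range N, (-1 : k) ^ j • (B j • (nabla ^ j) m) =
      ∑ j ∈ range N', (-1 : k) ^ j • (B j • (nabla ^ j) m) := by
  have extend : ∀ {N}, (∀ n ≥ N, (nabla ^ n) m = 0) → ∀ {L}, N ≤ L →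
      ∑ j ∈ range L, (-1 : k) ^ j • (B j • (nabla ^ j) m) =
        ∑ j ∈ range N, (-1 : k) ^ j • (B j • (nabla ^ j) m) :=
    fun hN _ hL => eventually_constant_sum (fun n hn => by simp [hN n hn]) hL
  rw [← extend hN (le_max_left N N'), extend hN' (le_max_right N N')]

def augmentationIdeal (B : ℕ → D) : Ideal D := Ideal.span (Set.range fun n => B (n + 1))

variable [Algebra k D] {d : D →ₗ[k] D}

theorem sum_antidiagonal_neg_one_pow_smul_mul_eq_zero
    (hmul : ∀ n m : ℕ, B n * B m = ((n + m).choose n : k) • B (n + m)) {t : ℕ} (ht : t ≠ 0) :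
    ∑ p ∈ antidiagonal t, (-1 : k) ^ p.1 • (B p.1 * B p.2) = 0 := by
  have hbinom : ∑ p ∈ antidiagonal t, (t.choose p.1 : k) * (-1) ^ p.1 = 0 := by
    simpa [nsmul_eq_mul, zero_pow ht] using ((Commute.all (-1 : k) 1).add_pow' t).symm
  calc ∑ p ∈ antidiagonal t, (-1 : k) ^ p.1 • (B p.1 * B p.2)
      = (∑ p ∈ antidiagonal t, (t.choose p.1 : k) * (-1) ^ p.1) • B t := by
        rw [sum_smul]
        refine sum_congr rfl fun p hp => ?_
        rw [hmul, mem_antidiagonal.1 hp, smul_smul, mul_comm]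
    _ = 0 := by rw [hbinom, zero_smul]

theorem pow_apply_basis (hd : ∀ n : ℕ, d (B n) = if n = 0 then 0 else B (n - 1))
    (a s : ℕ) : (d ^ a) (B s) = if a ≤ s then B (s - a) else 0 := by
  induction a generalizing s with
  | zero => simp
  | succ a ih =>
    rw [pow_succ, Module.End.mul_apply, hd]
    rcases s with _ | s
    · simp
    · simp [ih, Nat.add_sub_add_right]

theorem pow_apply_smul_of_connection
    (hconn : ∀ (f : D) (m : M), nabla (f • m) = f • nabla m + d f • m) (n : ℕ) (f : D) (m : M) :
    (nabla ^ n) (f • m) = ∑ p ∈ antidiagonal n, n.choose p.1 • ((d ^ p.1) f • (nabla ^ p.2) m) := by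
  induction n with
  | zero => simp
  | succ n ih =>
    rw [sum_antidiagonal_choose_succ_nsmul (fun i j => (d ^ i) f • (nabla ^ j) m) n]
    simp only [pow_succ', Module.End.mul_apply, ih, map_sum, map_nsmul, hconn, smul_add,
      sum_add_distrib, add_right_inj]
    refine sum_congr rfl fun p hp => ?_
    rw [n.choose_symm_of_eq_add (mem_antidiagonal.1 hp).symm]

variable [IsScalarTower k D M]

noncomputable def horizontalProj (B : ℕ → D) (nabla : M →ₗ[k] M)
    (hnil : ∀ m : M, ∃ N : ℕ, ∀ n ≥ N, (nabla ^ n) m = 0) : M →ₗ[k] M where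
  toFun m := ∑ j ∈ range (hnil m).choose, (-1 : k) ^ j • (B j • (nabla ^ j) m)
  map_add' m₁ m₂ := by
    obtain ⟨N₁, h₁⟩ := hnil m₁
    obtain ⟨N₂, h₂⟩ := hnil m₂
    have h₁' : ∀ n ≥ N₁ + N₂, (nabla ^ n) m₁ = 0 := fun n hn => h₁ n (by omega)
    have h₂' : ∀ n ≥ N₁ + N₂, (nabla ^ n) m₂ = 0 := fun n hn => h₂ n (by omega)
    rw [sum_range_neg_one_pow_smul_eq (hnil _).choose_spec (N' := N₁ + N₂)
        (fun n hn => by rw [map_add, h₁' n hn, h₂' n hn, add_zero]),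
      sum_range_neg_one_pow_smul_eq (hnil m₁).choose_spec h₁',
      sum_range_neg_one_pow_smul_eq (hnil m₂).choose_spec h₂', ← sum_add_distrib]
    simp only [map_add, smul_add]
  map_smul' c m := by
    obtain ⟨N, hN⟩ := hnil m
    rw [sum_range_neg_one_pow_smul_eq (hnil _).choose_spec (N' := N)
        (fun n hn => by rw [map_smul, hN n hn, smul_zero]),
      sum_range_neg_one_pow_smul_eq (hnil m).choose_spec hN, smul_sum]
    simp only [map_smul, smul_comm _ c, RingHom.id_apply]

variable (hnil : ∀ m : M, ∃ N : ℕ, ∀ n ≥ N, (nabla ^ n) m = 0)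

theorem horizontalProj_apply {m : M} {N : ℕ} (hN : ∀ n ≥ N, (nabla ^ n) m = 0) :
    horizontalProj B nabla hnil m = ∑ j ∈ range N, (-1 : k) ^ j • (B j • (nabla ^ j) m) :=
  sum_range_neg_one_pow_smul_eq (hnil m).choose_spec hN

theorem nabla_horizontalProj (hd : ∀ n : ℕ, d (B n) = if n = 0 then 0 else B (n - 1))
    (hconn : ∀ (f : D) (m : M), nabla (f • m) = f • nabla m + d f • m) (m : M) :
    nabla (horizontalProj B nabla hnil m) = 0 := by
  obtain ⟨N, hN⟩ := hnil m
  rw [horizontalProj_apply hnil (N := N + 1) fun n hn => hN n (by omega), map_sum]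
  simp only [map_smul, hconn, smul_add, sum_add_distrib]
  rw [sum_range_succ, sum_range_succ']
  simp [hd, ← Module.End.mul_apply, ← pow_succ', hN N le_rfl, pow_succ]

theorem horizontalProj_eq_self (hone : B 0 = 1) {m : M} (hm : nabla m = 0) :
    horizontalProj B nabla hnil m = m := by
  rw [horizontalProj_apply hnil (N := 1)]
  · simp [hone]
  · rintro (_ | n) hn
    · omega
    · rw [pow_succ, Module.End.mul_apply, hm, map_zero]

theorem horizontalProj_sub_mem (hone : B 0 = 1) (m : M) :
    horizontalProj B nabla hnil m - m ∈ augmentationIdeal B • (⊤ : Submodule D M) := by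
  obtain ⟨N, hN⟩ := hnil m
  rw [horizontalProj_apply hnil (N := N + 1) fun n hn => hN n (by omega), sum_range_succ']
  simp only [pow_zero, hone, one_smul, Module.End.one_apply, add_sub_cancel_right]
  exact sum_mem fun j _ => Submodule.smul_of_tower_mem _ _
    (Submodule.smul_mem_smul (Ideal.subset_span ⟨j, rfl⟩) Submodule.mem_top)

theorem horizontalProj_basis_smul
    (hmul : ∀ n m : ℕ, B n * B m = ((n + m).choose n : k) • B (n + m))
    (hd : ∀ n : ℕ, d (B n) = if n = 0 then 0 else B (n - 1))
    (hconn : ∀ (f : D) (m : M), nabla (f • m) = f • nabla m + d f • m)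
    {s : ℕ} (hs : s ≠ 0) (m : M) : horizontalProj B nabla hnil (B s • m) = 0 := by
  obtain ⟨N, hN⟩ := hnil m
  obtain ⟨L, hL⟩ := hnil (B s • m)
  set g : ℕ → ℕ → M := fun a b =>
    ((-1 : k) ^ a • (B a * (d ^ a) (B s))) • ((-1 : k) ^ b • (B b • (nabla ^ b) m))
  have hdB : ∀ a, s < a → (d ^ a) (B s) = 0 := fun a ha => by
    rw [pow_apply_basis hd, if_neg (by omega)]
  have hg : ∀ a b, L + N + s + 1 ≤ a + b → g a b = 0 := by
    intro a b hab
    rcases lt_or_ge s a with h | h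
    · simp [g, hdB a h]
    · simp [g, hN b (by omega)]
  -- Since `B a * B b = C(a+b, a) • B (a+b)`, the Leibniz expansion of `P (B s • m)` factors as
  -- `(∑ₐ (-1)ᵃ • (B a * dᵃ (B s))) • P m`, and the first factor is `0` by the binomial identity.
  have hexp : ∀ j, (-1 : k) ^ j • (B j • (nabla ^ j) (B s • m)) =
      ∑ p ∈ antidiagonal j, g p.1 p.2 := by
    intro j
    rw [pow_apply_smul_of_connection hconn, smul_sum, smul_sum]
    refine sum_congr rfl fun p hp => ?_
    obtain rfl := mem_antidiagonal.1 hp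
    simp only [g]
    have hB := hmul p.1 p.2
    rw [Algebra.smul_def, map_natCast] at hB
    rw [← Nat.cast_smul_eq_nsmul k]
    simp only [← algebraMap_smul D (_ : k), smul_smul, smul_eq_mul, map_pow, map_neg, map_one,
      map_natCast]
    congr 1
    linear_combination -(-1 : D) ^ (p.1 + p.2) * (d ^ p.1) (B s) * hB
  have hε : ∑ a ∈ range (L + N + s + 1), (-1 : k) ^ a • (B a * (d ^ a) (B s)) = 0 := by
    rw [eventually_constant_sum (N := s + 1) (fun a ha => by simp [hdB a ha]) (by omega),
      sum_congr rfl fun a ha => by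
        rw [pow_apply_basis hd, if_pos (Nat.lt_succ_iff.1 (mem_range.1 ha))],
      ← Nat.sum_antidiagonal_eq_sum_range_succ (fun a b => (-1 : k) ^ a • (B a * B b)),
      sum_antidiagonal_neg_one_pow_smul_mul_eq_zero hmul hs]
  rw [horizontalProj_apply hnil (N := L + N + s + 1) fun n hn => hL n (by omega),
    sum_congr rfl fun j _ => hexp j, sum_range_sum_antidiagonal_eq_sum_range_sum_range hg,
    ← sum_smul_sum, hε, zero_smul]

theorem horizontalProj_eq_zero_of_mem
    (hmul : ∀ n m : ℕ, B n * B m = ((n + m).choose n : k) • B (n + m))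
    (hd : ∀ n : ℕ, d (B n) = if n = 0 then 0 else B (n - 1))
    (hconn : ∀ (f : D) (m : M), nabla (f • m) = f • nabla m + d f • m) {m : M}
    (hm : m ∈ augmentationIdeal B • (⊤ : Submodule D M)) :
    horizontalProj B nabla hnil m = 0 := by
  induction hm using Submodule.smul_induction_on' with
  | smul f hf x _ =>
    induction hf using Submodule.span_induction generalizing x with
    | mem f hf =>
      obtain ⟨n, rfl⟩ := hf
      exact horizontalProj_basis_smul hnil hmul hd hconn n.succ_ne_zero x
    | zero => rw [zero_smul, map_zero]
    | add f g _ _ hf hg => rw [add_smul, map_add, hf x trivial, hg x trivial, add_zero]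
    | smul c f _ hf => rw [smul_eq_mul, mul_comm, mul_smul, hf _ trivial]
  | add x y _ _ hx hy => rw [map_add, hx, hy, add_zero]

theorem sum_basis_smul_horizontalProj (hone : B 0 = 1)
    (hmul : ∀ n m : ℕ, B n * B m = ((n + m).choose n : k) • B (n + m)) {m : M} {N : ℕ}
    (hN : ∀ n ≥ N, (nabla ^ n) m = 0) :
    ∑ n ∈ range N, B n • horizontalProj B nabla hnil ((nabla ^ n) m) = m := by
  set g : ℕ → ℕ → M := fun a b => ((-1 : k) ^ a • (B a * B b)) • (nabla ^ (a + b)) m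
  have hg : ∀ a b, N ≤ a + b → g a b = 0 := fun a b hab => by simp [g, hN _ hab]
  have hP : ∀ b, B b • horizontalProj B nabla hnil ((nabla ^ b) m) = ∑ a ∈ range N, g a b := by
    intro b
    rw [horizontalProj_apply hnil (N := N), smul_sum]
    · refine sum_congr rfl fun a _ => ?_
      rw [← Module.End.mul_apply, ← pow_add, smul_comm, smul_smul, mul_comm]
      exact (smul_assoc _ _ _).symm
    · intro n hn
      rw [← Module.End.mul_apply, ← pow_add, hN _ (by omega)]
  calc ∑ n ∈ range N, B n • horizontalProj B nabla hnil ((nabla ^ n) m)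
      = ∑ a ∈ range N, ∑ b ∈ range N, g a b := by
        rw [sum_comm]
        exact sum_congr rfl fun b _ => hP b
    _ = ∑ t ∈ range N, ∑ p ∈ antidiagonal t, g p.1 p.2 :=
        (sum_range_sum_antidiagonal_eq_sum_range_sum_range hg).symm
    _ = ∑ t ∈ range N,
          (∑ p ∈ antidiagonal t, (-1 : k) ^ p.1 • (B p.1 * B p.2)) • (nabla ^ t) m := by
        refine sum_congr rfl fun t _ => ?_
        rw [sum_smul]
        exact sum_congr rfl fun p hp => by rw [← mem_antidiagonal.1 hp]
    _ = m := by
        rw [sum_eq_single 0 (fun t _ ht => by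
          rw [sum_antidiagonal_neg_one_pow_smul_mul_eq_zero hmul ht, zero_smul])]
        · simp [hone]
        · intro h
          have hm : m = 0 := by simpa using hN 0 (by simpa using h)
          simp [hm]

theorem eq_zero_of_sum_basis_smul_eq_zero
    (hnil : ∀ m : M, ∃ N : ℕ, ∀ n ≥ N, (nabla ^ n) m = 0) (hone : B 0 = 1)
    (hmul : ∀ n m : ℕ, B n * B m = ((n + m).choose n : k) • B (n + m))
    (hd : ∀ n : ℕ, d (B n) = if n = 0 then 0 else B (n - 1))
    (hconn : ∀ (f : D) (m : M), nabla (f • m) = f • nabla m + d f • m)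
    {v : ℕ → M} (hv : ∀ n, nabla (v n) = 0) {N : ℕ} (hsum : ∑ n ∈ range N, B n • v n = 0) :
    ∀ n < N, v n = 0 := by
  induction N generalizing v with
  | zero => exact fun n hn => absurd hn n.not_lt_zero
  | succ N ih =>
    have hv₀ : v 0 = 0 := by
      have := congrArg (horizontalProj B nabla hnil) hsum
      rwa [map_sum, sum_range_succ', sum_eq_zero fun n _ =>
          horizontalProj_basis_smul hnil hmul hd hconn n.succ_ne_zero _,
        hone, one_smul, horizontalProj_eq_self hnil hone (hv 0), zero_add, map_zero] at this
    have hshift : ∑ n ∈ range N, B n • v (n + 1) = 0 := by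
      simpa [hconn, hv, hd, sum_range_succ'] using congrArg nabla hsum
    rintro (_ | n) hn
    · exact hv₀
    · exact ih (fun n => hv (n + 1)) hshift n (by omega)

theorem liftBaseChange_injective_of_nabla_eq_zero
    (hnil : ∀ m : M, ∃ N : ℕ, ∀ n ≥ N, (nabla ^ n) m = 0) (b : Module.Basis ℕ k D)
    (hone : b 0 = 1)
    (hmul : ∀ n m : ℕ, b n * b m = ((n + m).choose n : k) • b (n + m))
    (hd : ∀ n : ℕ, d (b n) = if n = 0 then 0 else b (n - 1))
    (hconn : ∀ (f : D) (m : M), nabla (f • m) = f • nabla m + d f • m)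
    {Q : Type*} [AddCommGroup Q] [Module k Q] {σ : Q →ₗ[k] M} (hσ : Function.Injective σ)
    (hhor : ∀ q, nabla (σ q) = 0) : Function.Injective (σ.liftBaseChange D) := by
  refine (injective_iff_map_eq_zero _).2 fun x hx => ?_
  obtain ⟨N, q, rfl⟩ := TensorProduct.exists_eq_sum_range_tmul b x
  simp only [map_sum, LinearMap.liftBaseChange_tmul] at hx
  have hq := eq_zero_of_sum_basis_smul_eq_zero hnil hone hmul hd hconn (fun n => hhor (q n)) hx
  exact sum_eq_zero fun n hn => by
    rw [(map_eq_zero_iff σ hσ).1 (hq n (mem_range.1 hn)), TensorProduct.tmul_zero]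

end DividedPowerConnection

open DividedPowerConnection

/-- If a graded (bounded-below) `D`-module `M` admits a connection `nabla`, then
`Φ(m) = ∑ n, x^[n] ⊗ (nabla^n m)₀` is an isomorphism of `D`-modules `M ≅ D ⊗ₖ (M / D₊M)`.
Bounded-below-ness is encoded by local nilpotence of `nabla` (the sum is finite). -/
theorem stmt3 (k D : Type*) [CommRing k] [CommRing D] [Algebra k D]
    (B : Module.Basis ℕ k D) (hone : B 0 = 1)
    (hmul : ∀ n m : ℕ, B n * B m = ((n + m).choose n : k) • B (n + m))
    (d : D →ₗ[k] D)
    (hd : ∀ n : ℕ, d (B n) = if n = 0 then 0 else B (n - 1))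
    (M : Type*) [AddCommGroup M] [Module D M] [Module k M] [IsScalarTower k D M]
    (nabla : M →ₗ[k] M)
    (hconn : ∀ (f : D) (m : M), nabla (f • m) = f • nabla m + d f • m)
    (hnil : ∀ m : M, ∃ N : ℕ, ∀ n ≥ N, (nabla ^ n) m = 0) :
    ∃ Φ : M ≃ₗ[D] (D ⊗[k] (M ⧸ Submodule.restrictScalars k
        ((Ideal.span (Set.range fun n : ℕ => B (n + 1))) • (⊤ : Submodule D M)))),
      ∀ (m : M) (N : ℕ), (∀ n ≥ N, (nabla ^ n) m = 0) →
        Φ m = ∑ n ∈ Finset.range N, B n ⊗ₜ[k]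
          (Submodule.mkQ _ ((nabla ^ n) m)) := by
  set J := Submodule.restrictScalars k
    ((Ideal.span (Set.range fun n : ℕ => B (n + 1))) • (⊤ : Submodule D M))
  let σ : (M ⧸ J) →ₗ[k] M := J.liftQ (horizontalProj B nabla hnil) fun _ hm =>
    horizontalProj_eq_zero_of_mem hnil hmul hd hconn hm
  have hσ : Function.LeftInverse J.mkQ σ := fun q => by
    obtain ⟨m, rfl⟩ := J.mkQ_surjective q
    exact (Submodule.Quotient.eq J).2 (horizontalProj_sub_mem hnil hone m)
  have hhor : ∀ q, nabla (σ q) = 0 := fun q => by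
    obtain ⟨m, rfl⟩ := J.mkQ_surjective q
    exact nabla_horizontalProj hnil hd hconn m
  let Ψ : D ⊗[k] (M ⧸ J) →ₗ[D] M := σ.liftBaseChange D
  have hΨ : ∀ m N, (∀ n ≥ N, (nabla ^ n) m = 0) →
      Ψ (∑ n ∈ range N, B n ⊗ₜ J.mkQ ((nabla ^ n) m)) = m := fun m N hN =>
    (map_sum Ψ _ _).trans (sum_basis_smul_horizontalProj hnil hone hmul hN)
  have hbij : Function.Bijective Ψ :=
    ⟨liftBaseChange_injective_of_nabla_eq_zero hnil B hone hmul hd hconn hσ.injective hhor,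
      fun m => (hnil m).elim fun N hN => ⟨_, hΨ m N hN⟩⟩
  refine ⟨(LinearEquiv.ofBijective Ψ hbij).symm, fun m N hN => ?_⟩
  rw [LinearEquiv.symm_apply_eq]
  exact (hΨ m N hN).symm
end

section
/- Let M be a graded D-module with a connection ∇. Under the isomorphism Φ : M → D ⊗_k (M/D_+M) from the previous result, the connection ∇ corresponds to d ⊗ 1, and Φ identifies ker(∇) with M/D_+M; consequently the natural map ker(∇) ⊗_k D → M is an isomorphism of D-modules. -/
/-!
`Φ` is a Taylor expansion along `∇`, and `d` lowers the divided powers `x^[n]` exactly as `∇`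
raises the order of the coefficients `(∇ⁿ m)₀`; hence `Φ ∘ ∇ = (d ⊗ 1) ∘ Φ`. The kernel of
`d ⊗ 1` is `1 ⊗ M/D₊M`, so `Φ` carries `ker ∇` onto it, i.e. `ker ∇ → M/D₊M` is bijective.
Base-changing this bijection to `D` and composing with `Φ⁻¹` gives the multiplication map
`D ⊗ ker ∇ → M`.
-/

open scoped TensorProduct

lemma Module.Basis.tmul_injective {ι k D Q : Type*} [CommRing k] [AddCommGroup D] [Module k D]
    [AddCommGroup Q] [Module k Q] (B : Module.Basis ι k D) (i : ι) :
    Function.Injective fun q : Q => B i ⊗ₜ[k] q := by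
  intro q q' h
  simpa using congrArg (fun t => TensorProduct.lid k Q (LinearMap.rTensor Q (B.coord i) t)) h

section TaylorExpansion

variable {k D M Q : Type*} [CommRing k] [CommRing D] [Algebra k D]
  [AddCommGroup M] [Module k M] [AddCommGroup Q] [Module k Q]
  {B : Module.Basis ℕ k D} {nabla : M →ₗ[k] M} {π : M →ₗ[k] Q} {Φ : M → D ⊗[k] Q}

/-- `Φ m = ∑ₙ x^[n] ⊗ (∇ⁿ m)₀`, with `B n = x^[n]` and `π m = m₀`. -/
def IsTaylorExpansion (B : Module.Basis ℕ k D) (nabla : M →ₗ[k] M) (π : M →ₗ[k] Q)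
    (Φ : M → D ⊗[k] Q) : Prop :=
  ∀ (m : M) (N : ℕ), (∀ n ≥ N, (nabla ^ n) m = 0) →
    Φ m = ∑ n ∈ Finset.range N, B n ⊗ₜ[k] π ((nabla ^ n) m)

namespace IsTaylorExpansion

lemma apply_of_nabla_eq_zero (hΦ : IsTaylorExpansion B nabla π Φ) {x : M} (hx : nabla x = 0) :
    Φ x = B 0 ⊗ₜ[k] π x := by
  have hpow : ∀ n ≥ 1, (nabla ^ n) x = 0 := by
    intro n hn
    obtain ⟨n, rfl⟩ := Nat.exists_eq_add_of_le' hn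
    rw [pow_succ, Module.End.mul_apply, hx, map_zero]
  simp [hΦ x 1 hpow]

lemma apply_nabla (hΦ : IsTaylorExpansion B nabla π Φ) {d : D →ₗ[k] D}
    (hd : ∀ n : ℕ, d (B n) = if n = 0 then 0 else B (n - 1)) {m : M}
    (hm : ∃ N : ℕ, ∀ n ≥ N, (nabla ^ n) m = 0) :
    Φ (nabla m) = LinearMap.rTensor Q d (Φ m) := by
  obtain ⟨N, hN⟩ := hm
  have hshift : ∀ n : ℕ, (nabla ^ n) (nabla m) = (nabla ^ (n + 1)) m := fun n => by
    rw [pow_succ, Module.End.mul_apply]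
  have hN' : ∀ n ≥ N, (nabla ^ n) (nabla m) = 0 := fun n hn => by
    rw [hshift, hN (n + 1) (by omega)]
  rw [hΦ (nabla m) N hN', hΦ m (N + 1) fun n hn => hN n (by omega), map_sum,
    Finset.sum_range_succ']
  simp [hshift, hd]

lemma bijective_restrict_ker (hΦ : IsTaylorExpansion B nabla π Φ) (hbij : Function.Bijective Φ)
    {d : D →ₗ[k] D} (hd : ∀ n : ℕ, d (B n) = if n = 0 then 0 else B (n - 1))
    (hnil : ∀ m : M, ∃ N : ℕ, ∀ n ≥ N, (nabla ^ n) m = 0) :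
    Function.Bijective fun x : LinearMap.ker nabla => π (x : M) := by
  have hΦ_ker (x : LinearMap.ker nabla) : Φ x = B 0 ⊗ₜ[k] π x :=
    hΦ.apply_of_nabla_eq_zero x.2
  refine ⟨fun x y hxy => Subtype.ext <| hbij.injective ?_, fun q => ?_⟩
  · rw [hΦ_ker, hΦ_ker]
    exact congrArg _ hxy
  · obtain ⟨y, hy⟩ := hbij.surjective (B 0 ⊗ₜ[k] q)
    have hΦ0 : Φ 0 = 0 := hΦ 0 0 (by simp)
    have hy_ker : nabla y = 0 := hbij.injective <| by
      rw [hΦ.apply_nabla hd (hnil y), hy, hΦ0]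
      simp [hd]
    exact ⟨⟨y, hy_ker⟩, B.tmul_injective 0 <| (hΦ.apply_of_nabla_eq_zero hy_ker).symm.trans hy⟩

end IsTaylorExpansion

end TaylorExpansion

lemma bijective_liftBaseChange_subtype {k D M Q : Type*} [CommRing k] [CommRing D] [Algebra k D]
    [AddCommGroup M] [Module D M] [Module k M] [IsScalarTower k D M]
    [AddCommGroup Q] [Module k Q] (Φ : M ≃ₗ[D] D ⊗[k] Q) (π : M →ₗ[k] Q) (K : Submodule k M)
    (hK : Function.Bijective (π ∘ₗ K.subtype)) (hΦ : ∀ x ∈ K, Φ x = 1 ⊗ₜ[k] π x) :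
    Function.Bijective (K.subtype.liftBaseChange D) := by
  let e : K ≃ₗ[k] Q := LinearEquiv.ofBijective (π ∘ₗ K.subtype) hK
  have hμ : K.subtype.liftBaseChange D = ((e.baseChange k D _ _).trans Φ.symm).toLinearMap := by
    ext x
    apply Φ.injective
    simp [e, hΦ x x.2]
  rw [hμ]
  exact LinearEquiv.bijective _

theorem stmt4_general (k D : Type*) [CommRing k] [CommRing D] [Algebra k D]
    (B : Module.Basis ℕ k D) (hone : B 0 = 1)
    (d : D →ₗ[k] D)
    (hd : ∀ n : ℕ, d (B n) = if n = 0 then 0 else B (n - 1))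
    (M : Type*) [AddCommGroup M] [Module D M] [Module k M] [IsScalarTower k D M]
    (nabla : M →ₗ[k] M)
    (hnil : ∀ m : M, ∃ N : ℕ, ∀ n ≥ N, (nabla ^ n) m = 0)
    (Φ : M ≃ₗ[D] (D ⊗[k] (M ⧸ Submodule.restrictScalars k
        ((Ideal.span (Set.range fun n : ℕ => B (n + 1))) • (⊤ : Submodule D M)))))
    (hΦ : ∀ (m : M) (N : ℕ), (∀ n ≥ N, (nabla ^ n) m = 0) →
        Φ m = ∑ n ∈ Finset.range N, B n ⊗ₜ[k]
          (Submodule.mkQ _ ((nabla ^ n) m))) :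
    (∀ m : M, Φ (nabla m) = (LinearMap.rTensor _ d) (Φ m)) ∧
    (Function.Bijective fun x : LinearMap.ker nabla =>
      Submodule.mkQ (Submodule.restrictScalars k
        ((Ideal.span (Set.range fun n : ℕ => B (n + 1))) • (⊤ : Submodule D M))) (x : M)) ∧
    (∃ μ : (D ⊗[k] LinearMap.ker nabla) →ₗ[D] M,
      (∀ (f : D) (x : LinearMap.ker nabla), μ (f ⊗ₜ[k] x) = f • (x : M)) ∧
      Function.Bijective μ) := by
  have hTaylor : IsTaylorExpansion B nabla (Submodule.mkQ _) Φ := hΦ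
  have hker := hTaylor.bijective_restrict_ker Φ.bijective hd hnil
  refine ⟨fun m => hTaylor.apply_nabla hd (hnil m), hker,
    (LinearMap.ker nabla).subtype.liftBaseChange D, fun f x => rfl,
    bijective_liftBaseChange_subtype Φ (Submodule.mkQ _) _ hker fun x hx => ?_⟩
  rw [← hone]
  exact hTaylor.apply_of_nabla_eq_zero hx

/-- For a graded `D`-module `M` with connection `nabla` and the isomorphism
`Φ(m) = ∑ n, x^[n] ⊗ (nabla^n m)₀` of the previous result: `Φ` intertwines `nabla`
with `d ⊗ 1`, identifies `ker nabla` with `M/D₊M`, and the natural map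
`ker(nabla) ⊗ₖ D → M`, `x ⊗ f ↦ f • x`, is an isomorphism of `D`-modules. -/
theorem stmt4 (k D : Type*) [CommRing k] [CommRing D] [Algebra k D]
    (B : Module.Basis ℕ k D) (hone : B 0 = 1)
    (hmul : ∀ n m : ℕ, B n * B m = ((n + m).choose n : k) • B (n + m))
    (d : D →ₗ[k] D)
    (hd : ∀ n : ℕ, d (B n) = if n = 0 then 0 else B (n - 1))
    (M : Type*) [AddCommGroup M] [Module D M] [Module k M] [IsScalarTower k D M]
    (nabla : M →ₗ[k] M)
    (hconn : ∀ (f : D) (m : M), nabla (f • m) = f • nabla m + d f • m)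
    (hnil : ∀ m : M, ∃ N : ℕ, ∀ n ≥ N, (nabla ^ n) m = 0)
    (Φ : M ≃ₗ[D] (D ⊗[k] (M ⧸ Submodule.restrictScalars k
        ((Ideal.span (Set.range fun n : ℕ => B (n + 1))) • (⊤ : Submodule D M)))))
    (hΦ : ∀ (m : M) (N : ℕ), (∀ n ≥ N, (nabla ^ n) m = 0) →
        Φ m = ∑ n ∈ Finset.range N, B n ⊗ₜ[k]
          (Submodule.mkQ _ ((nabla ^ n) m))) :
    (∀ m : M, Φ (nabla m) = (LinearMap.rTensor _ d) (Φ m)) ∧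
    (Function.Bijective fun x : LinearMap.ker nabla =>
      Submodule.mkQ (Submodule.restrictScalars k
        ((Ideal.span (Set.range fun n : ℕ => B (n + 1))) • (⊤ : Submodule D M))) (x : M)) ∧
    (∃ μ : (D ⊗[k] LinearMap.ker nabla) →ₗ[D] M,
      (∀ (f : D) (x : LinearMap.ker nabla), μ (f ⊗ₜ[k] x) = f • (x : M)) ∧
      Function.Bijective μ) :=
  stmt4_general k D B hone d hd M nabla hnil Φ hΦ
end

section
/- Let f : M → N be a map of non-negatively graded D-modules such that the induced map M/D_+M → N/D_+N is an isomorphism, and suppose N is of the form D ⊗_k N' for some graded k-module N'. Then f is an isomorphism. -/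
/-!
Both halves are graded Nakayama: if `W ≤ R ⊔ D₊ • W` for homogeneous `D`-submodules `W` and `R`,
then `W ≤ R`, by induction on the degree, because `D₊` is spanned over `k` by elements of positive
degree. Surjectivity is the case `W = N`, `R = range f`. For injectivity, `K = ker f` lies in
`D₊ • M` by hypothesis, and `ker f ⊓ D₊ • M = D₊ • K` because `Tor₁(D/D₊, N) = 0`: the
multiplication map `D₊ ⊗_D N → N` is injective, since `N ≅ D ⊗ₖ N'` and `D₊` is a `k`-direct
summand of `D`. Hence `K ≤ D₊ • K`, so `K = 0`.
-/

open DirectSum TensorProduct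

section ShiftedDecomposition

variable {P Q σP σQ : Type*} [AddCommMonoid P] [AddCommMonoid Q]
  [SetLike σP P] [AddSubmonoidClass σP P] [SetLike σQ Q] [AddSubmonoidClass σQ Q]
  (𝒜 : ℕ → σP) (ℬ : ℕ → σQ) [Decomposition 𝒜] [Decomposition ℬ] (φ : P →+ Q) (d : ℕ)

theorem decompose_map_add_eq (hφ : ∀ j, ∀ x ∈ 𝒜 j, φ x ∈ ℬ (j + d)) (y : P) (m : ℕ) :
    (decompose ℬ (φ y) (m + d) : Q) = φ (decompose 𝒜 y m) := by
  induction y using Decomposition.inductionOn 𝒜 with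
  | zero => simp
  | @homogeneous j x =>
    obtain ⟨x, hx⟩ := x
    by_cases hjm : j = m
    · subst hjm
      rw [decompose_of_mem_same 𝒜 hx, decompose_of_mem_same ℬ (hφ j x hx)]
    · rw [decompose_of_mem_ne 𝒜 hx hjm, decompose_of_mem_ne ℬ (hφ j x hx) (by omega),
        map_zero]
  | add a b ha hb =>
    simp only [map_add, decompose_add, DirectSum.add_apply, AddMemClass.coe_add, ha, hb]

theorem decompose_map_eq_zero_of_lt (hφ : ∀ j, ∀ x ∈ 𝒜 j, φ x ∈ ℬ (j + d)) (y : P) {n : ℕ}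
    (hn : n < d) : (decompose ℬ (φ y) n : Q) = 0 := by
  induction y using Decomposition.inductionOn 𝒜 with
  | zero => simp
  | @homogeneous j x =>
    obtain ⟨x, hx⟩ := x
    rw [decompose_of_mem_ne ℬ (hφ j x hx) (by omega)]
  | add a b ha hb =>
    simp only [map_add, decompose_add, DirectSum.add_apply, AddMemClass.coe_add, ha, hb,
      add_zero]

end ShiftedDecomposition

section GradedMap

variable {R M N : Type*} [Semiring R] [AddCommMonoid M] [Module R M] [AddCommMonoid N]
  [Module R N] {σM σN : Type*} [SetLike σM M] [AddSubmonoidClass σM M] [SetLike σN N]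
  [AddSubmonoidClass σN N] (ℳ : ℕ → σM) (𝒩 : ℕ → σN) [Decomposition ℳ] [Decomposition 𝒩]
  (f : M →ₗ[R] N)

theorem decompose_map_eq (hf : ∀ n, ∀ x ∈ ℳ n, f x ∈ 𝒩 n) (x : M) (n : ℕ) :
    (decompose 𝒩 (f x) n : N) = f (decompose ℳ x n) :=
  decompose_map_add_eq ℳ 𝒩 f.toAddMonoidHom 0 hf x n

theorem isHomogeneous_range (hf : ∀ n, ∀ x ∈ ℳ n, f x ∈ 𝒩 n) :
    (LinearMap.range f).IsHomogeneous 𝒩 := by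
  rintro n _ ⟨x, rfl⟩
  exact ⟨_, (decompose_map_eq ℳ 𝒩 f hf x n).symm⟩

theorem isHomogeneous_ker (hf : ∀ n, ∀ x ∈ ℳ n, f x ∈ 𝒩 n) :
    (LinearMap.ker f).IsHomogeneous ℳ := by
  intro n x hx
  rw [LinearMap.mem_ker] at hx ⊢
  rw [← decompose_map_eq ℳ 𝒩 f hf, hx, decompose_zero, DirectSum.zero_apply,
    ZeroMemClass.coe_zero]

end GradedMap

section IdealTensor

variable {R M N : Type*} [CommRing R] [AddCommGroup M] [Module R M] [AddCommGroup N]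
  [Module R N] (I : Ideal R)

theorem lift_lsmul_comp_lTensor (g : M →ₗ[R] N) :
    lift ((LinearMap.lsmul R N).comp I.subtype) ∘ₗ g.lTensor I =
      g ∘ₗ lift ((LinearMap.lsmul R M).comp I.subtype) :=
  TensorProduct.ext' fun a x => by simp

theorem range_lift_lsmul_comp_lTensor_subtype (p : Submodule R M) :
    LinearMap.range (lift ((LinearMap.lsmul R M).comp I.subtype) ∘ₗ p.subtype.lTensor I) =
      I • p := by
  apply le_antisymm
  · rintro _ ⟨t, rfl⟩
    induction t using TensorProduct.induction_on with
    | zero => simp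
    | tmul a x => simpa using Submodule.smul_mem_smul a.2 x.2
    | add t₁ t₂ h₁ h₂ => simpa using add_mem h₁ h₂
  · refine Submodule.smul_le.mpr fun a ha x hx => ⟨⟨a, ha⟩ ⊗ₜ ⟨x, hx⟩, by simp⟩

theorem ker_inf_smul_top_le_smul_ker (f : M →ₗ[R] N) (hf : Function.Surjective f)
    (hI : Function.Injective (lift ((LinearMap.lsmul R N).comp I.subtype))) :
    LinearMap.ker f ⊓ I • ⊤ ≤ I • LinearMap.ker f := by
  intro x hx
  obtain ⟨hx, hxI⟩ := Submodule.mem_inf.mp hx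
  rw [← range_lift_lsmul_comp_lTensor_subtype] at hxI
  obtain ⟨ξ, rfl⟩ := hxI
  rw [LinearMap.comp_apply] at hx ⊢
  have hξ : (⊤ : Submodule R M).subtype.lTensor I ξ ∈ LinearMap.ker (f.lTensor I) := by
    refine hI ?_
    rw [← LinearMap.comp_apply, lift_lsmul_comp_lTensor, LinearMap.comp_apply, hx, map_zero]
  obtain ⟨η, hη⟩ := (lTensor_exact I f.exact_subtype_ker_map hf _).mp hξ
  rw [← range_lift_lsmul_comp_lTensor_subtype, ← hη]
  exact LinearMap.mem_range_self _ η

end IdealTensor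

section BaseChange

variable {k D : Type*} [CommRing k] [CommRing D] [Algebra k D]

theorem lift_lsmul_comp_subtype_injective_of_linearEquiv {M N : Type*} [AddCommGroup M]
    [Module D M] [AddCommGroup N] [Module D N] (I : Ideal D) (e : M ≃ₗ[D] N)
    (h : Function.Injective (lift ((LinearMap.lsmul D N).comp I.subtype))) :
    Function.Injective (lift ((LinearMap.lsmul D M).comp I.subtype)) := by
  refine Function.Injective.of_comp (f := e) ?_
  rw [← LinearEquiv.coe_coe, ← LinearMap.coe_comp, ← lift_lsmul_comp_lTensor, LinearMap.coe_comp]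
  exact h.comp (e.lTensor I).injective

theorem lift_lsmul_comp_subtype_eq_rTensor_comp_cancelBaseChange (I : Ideal D)
    (N' : Type*) [AddCommGroup N'] [Module k N'] :
    lift ((LinearMap.lsmul D (D ⊗[k] N')).comp I.subtype) =
      AlgebraTensorModule.rTensor k N' I.subtype ∘ₗ
        (AlgebraTensorModule.cancelBaseChange k D D I N').toLinearMap := by
  ext a d
  simp [smul_tmul']

theorem lift_lsmul_comp_subtype_injective_of_retraction (I : Ideal D) (r : D →ₗ[k] I)
    (hr : r ∘ₗ I.subtype.restrictScalars k = LinearMap.id)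
    (N' : Type*) [AddCommGroup N'] [Module k N'] :
    Function.Injective (lift ((LinearMap.lsmul D (D ⊗[k] N')).comp I.subtype)) := by
  rw [lift_lsmul_comp_subtype_eq_rTensor_comp_cancelBaseChange, LinearMap.coe_comp,
    LinearEquiv.coe_coe]
  refine Function.Injective.comp ?_ (AlgebraTensorModule.cancelBaseChange k D D I N').injective
  exact LinearMap.injective_of_comp_eq_id ((I.subtype.restrictScalars k).rTensor N')
    (r.rTensor N') (by rw [← LinearMap.rTensor_comp, hr, LinearMap.rTensor_id])

end BaseChange

section DividedPowers

variable {k D : Type*} [CommRing k] [CommRing D] [Algebra k D] (B : Module.Basis ℕ k D)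

/-- The ideal `D₊` of elements of positive degree. -/
def augIdeal : Ideal D :=
  Ideal.span (Set.range fun n : ℕ => B (n + 1))

theorem restrictScalars_augIdeal
    (hmul : ∀ n m : ℕ, B n * B m = ((n + m).choose n : k) • B (n + m)) :
    (augIdeal B).restrictScalars k = Submodule.span k (Set.range fun n : ℕ => B (n + 1)) := by
  set J := Submodule.span k (Set.range fun n : ℕ => B (n + 1))
  have hmulJ : ∀ d s, s ∈ J → d * s ∈ J := by
    intro d s hs
    have hd : d ∈ Submodule.span k (Set.range B) := B.span_eq ▸ Submodule.mem_top
    have hprod := Submodule.mul_mem_mul hd hs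
    rw [Submodule.span_mul_span] at hprod
    refine Submodule.span_le.mpr ?_ hprod
    rintro _ ⟨_, ⟨i, rfl⟩, _, ⟨m, rfl⟩, rfl⟩
    simp only [SetLike.mem_coe, hmul, ← add_assoc]
    exact J.smul_mem _ (Submodule.subset_span ⟨i + m, rfl⟩)
  refine le_antisymm (fun x hx => ?_) (Submodule.span_le.mpr Ideal.subset_span)
  induction hx using Submodule.span_induction with
  | mem x hx => exact Submodule.subset_span hx
  | zero => exact J.zero_mem
  | add x y _ _ hx hy => exact J.add_mem hx hy
  | smul d x _ hx => exact hmulJ d x hx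

theorem exists_retraction_augIdeal
    (hmul : ∀ n m : ℕ, B n * B m = ((n + m).choose n : k) • B (n + m)) :
    ∃ r : D →ₗ[k] augIdeal B, r ∘ₗ (augIdeal B).subtype.restrictScalars k = LinearMap.id := by
  let r : D →ₗ[k] augIdeal B :=
    B.constr k fun n => Nat.casesOn n 0 fun m => ⟨B (m + 1), Ideal.subset_span ⟨m, rfl⟩⟩
  refine ⟨r, LinearMap.ext fun a => Subtype.ext ?_⟩
  have ha : (a : D) ∈ Submodule.span k (Set.range fun n : ℕ => B (n + 1)) :=
    restrictScalars_augIdeal B hmul ▸ a.2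
  refine LinearMap.eqOn_span (f := (augIdeal B).subtype.restrictScalars k ∘ₗ r)
    (g := LinearMap.id) ?_ ha
  rintro _ ⟨m, rfl⟩
  simp [r]

end DividedPowers

section GradedNakayama

variable {k D : Type*} [CommRing k] [CommRing D] [Algebra k D] (B : Module.Basis ℕ k D)
  {P : Type*} [AddCommMonoid P] [Module D P] [Module k P] [IsScalarTower k D P]
  (𝒬 : ℕ → Submodule k P) [Decomposition 𝒬]

theorem decompose_mem_of_mem_augIdeal_smul
    (hmul : ∀ n m : ℕ, B n * B m = ((n + m).choose n : k) • B (n + m))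
    (hP : ∀ (i n : ℕ) (x : P), x ∈ 𝒬 n → B i • x ∈ 𝒬 (i + n)) {W R : Submodule D P}
    (hW : W.IsHomogeneous 𝒬) {n : ℕ} (hR : ∀ m < n, ∀ w ∈ W, w ∈ 𝒬 m → w ∈ R) {x : P}
    (hx : x ∈ augIdeal B • W) :
    (decompose 𝒬 x n : P) ∈ R := by
  refine Submodule.smul_induction_on hx (fun a ha w hw => ?_) (fun x y hx hy => ?_)
  · replace ha : a ∈ Submodule.span k (Set.range fun n : ℕ => B (n + 1)) :=
      restrictScalars_augIdeal B hmul ▸ ha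
    induction ha using Submodule.span_induction with
    | mem a ha =>
      obtain ⟨i, rfl⟩ := ha
      have hshift : ∀ j, ∀ x ∈ 𝒬 j, B (i + 1) • x ∈ 𝒬 (j + (i + 1)) :=
        fun j x hx => add_comm (i + 1) j ▸ hP (i + 1) j x hx
      show (decompose 𝒬 (DistribSMul.toAddMonoidHom P (B (i + 1)) w) n : P) ∈ R
      rcases lt_or_ge n (i + 1) with hn | hn
      · rw [decompose_map_eq_zero_of_lt 𝒬 𝒬 _ _ hshift w hn]
        exact R.zero_mem
      · obtain ⟨m, rfl⟩ := Nat.exists_eq_add_of_le' hn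
        rw [decompose_map_add_eq 𝒬 𝒬 _ _ hshift w m]
        exact R.smul_mem _ (hR m (by omega) _ (hW m hw) (decompose 𝒬 w m).2)
    | zero => simp
    | add a b _ _ ha hb =>
      rw [add_smul, decompose_add, DirectSum.add_apply, Submodule.coe_add]
      exact R.add_mem ha hb
    | smul c a _ ha =>
      rw [smul_assoc, decompose_smul, DirectSum.smul_apply, Submodule.coe_smul]
      exact R.smul_of_tower_mem c ha
  · rw [decompose_add, DirectSum.add_apply, Submodule.coe_add]
    exact R.add_mem hx hy

theorem le_of_le_sup_augIdeal_smul
    (hmul : ∀ n m : ℕ, B n * B m = ((n + m).choose n : k) • B (n + m))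
    (hP : ∀ (i n : ℕ) (x : P), x ∈ 𝒬 n → B i • x ∈ 𝒬 (i + n)) {W R : Submodule D P}
    (hW : W.IsHomogeneous 𝒬) (hR : R.IsHomogeneous 𝒬) (h : W ≤ R ⊔ augIdeal B • W) :
    W ≤ R := by
  have hhom : ∀ n, ∀ w ∈ W, w ∈ 𝒬 n → w ∈ R := by
    intro n
    induction n using Nat.strong_induction_on with
    | _ n ih =>
      intro w hw hwn
      obtain ⟨r, hr, z, hz, rfl⟩ := Submodule.mem_sup.mp (h hw)
      rw [← decompose_of_mem_same 𝒬 hwn, decompose_add, DirectSum.add_apply, Submodule.coe_add]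
      exact R.add_mem (hR n hr) (decompose_mem_of_mem_augIdeal_smul B 𝒬 hmul hP hW ih hz)
  intro x hx
  exact (hR.mem_iff 𝒬).mpr fun n => hhom n _ (hW n hx) (decompose 𝒬 x n).2

end GradedNakayama

theorem stmt6_general (k D : Type*) [CommRing k] [CommRing D] [Algebra k D]
    (B : Module.Basis ℕ k D)
    (hmul : ∀ n m : ℕ, B n * B m = ((n + m).choose n : k) • B (n + m))
    (M N : Type*) [AddCommGroup M] [Module D M] [Module k M] [IsScalarTower k D M]
    [AddCommGroup N] [Module D N] [Module k N] [IsScalarTower k D N]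
    (ℳ : ℕ → Submodule k M) [DirectSum.Decomposition ℳ]
    (𝒩 : ℕ → Submodule k N) [DirectSum.Decomposition 𝒩]
    (hM : ∀ (i n : ℕ) (x : M), x ∈ ℳ n → B i • x ∈ ℳ (i + n))
    (hN : ∀ (i n : ℕ) (x : N), x ∈ 𝒩 n → B i • x ∈ 𝒩 (i + n))
    (N' : Type*) [AddCommGroup N'] [Module k N'] (e : N ≃ₗ[D] (D ⊗[k] N'))
    (f : M →ₗ[D] N) (hf : ∀ (n : ℕ) (x : M), x ∈ ℳ n → f x ∈ 𝒩 n)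
    (hsurj : Function.Surjective
      ((Submodule.mkQ (Submodule.restrictScalars k
        ((Ideal.span (Set.range fun n : ℕ => B (n + 1))) • (⊤ : Submodule D N)))).comp
        (f.restrictScalars k)))
    (hinj : ∀ m : M,
      (Submodule.mkQ (Submodule.restrictScalars k
        ((Ideal.span (Set.range fun n : ℕ => B (n + 1))) • (⊤ : Submodule D N)))) (f m) = 0 →
      m ∈ Submodule.restrictScalars k
        ((Ideal.span (Set.range fun n : ℕ => B (n + 1))) • (⊤ : Submodule D M))) :
    Function.Bijective f := by
  have hf_surj : Function.Surjective f := by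
    rw [← LinearMap.range_eq_top, eq_top_iff]
    refine le_of_le_sup_augIdeal_smul B 𝒩 hmul hN (fun _ _ _ => trivial)
      (isHomogeneous_range ℳ 𝒩 f hf) fun y _ => ?_
    obtain ⟨x, hx⟩ := hsurj (Submodule.mkQ _ y)
    have hxy : f x - y ∈ augIdeal B • (⊤ : Submodule D N) := (Submodule.Quotient.eq _).mp hx
    exact Submodule.mem_sup.mpr ⟨f x, ⟨x, rfl⟩, -(f x - y), neg_mem hxy, by abel⟩
  obtain ⟨r, hr⟩ := exists_retraction_augIdeal B hmul
  have hN_tor := lift_lsmul_comp_subtype_injective_of_linearEquiv _ e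
    (lift_lsmul_comp_subtype_injective_of_retraction _ r hr N')
  have hker : LinearMap.ker f ≤ augIdeal B • LinearMap.ker f := fun x hx =>
    ker_inf_smul_top_le_smul_ker _ f hf_surj hN_tor
      ⟨hx, hinj x (by simp [LinearMap.mem_ker.mp hx])⟩
  refine ⟨LinearMap.ker_eq_bot.mp (eq_bot_iff.mpr ?_), hf_surj⟩
  exact le_of_le_sup_augIdeal_smul B ℳ hmul hM (isHomogeneous_ker ℳ 𝒩 f hf)
    (fun _ _ hx => by simp [(Submodule.mem_bot D).mp hx]) (hker.trans le_sup_right)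

/-- If `f : M → N` is a map of non-negatively graded `D`-modules inducing an isomorphism
`M/D₊M → N/D₊N`, and `N ≅ D ⊗ₖ N'` for some graded `k`-module `N'`, then `f` is an
isomorphism. The induced map being an isomorphism is encoded by: `mkQ ∘ f` is surjective
and its kernel is contained in `D₊M`. -/
theorem stmt6 (k D : Type*) [CommRing k] [CommRing D] [Algebra k D]
    (B : Module.Basis ℕ k D) (hone : B 0 = 1)
    (hmul : ∀ n m : ℕ, B n * B m = ((n + m).choose n : k) • B (n + m))
    (M N : Type*) [AddCommGroup M] [Module D M] [Module k M] [IsScalarTower k D M]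
    [AddCommGroup N] [Module D N] [Module k N] [IsScalarTower k D N]
    (ℳ : ℕ → Submodule k M) [DirectSum.Decomposition ℳ]
    (𝒩 : ℕ → Submodule k N) [DirectSum.Decomposition 𝒩]
    (hM : ∀ (i n : ℕ) (x : M), x ∈ ℳ n → B i • x ∈ ℳ (i + n))
    (hN : ∀ (i n : ℕ) (x : N), x ∈ 𝒩 n → B i • x ∈ 𝒩 (i + n))
    (N' : Type*) [AddCommGroup N'] [Module k N'] (e : N ≃ₗ[D] (D ⊗[k] N'))
    (f : M →ₗ[D] N) (hf : ∀ (n : ℕ) (x : M), x ∈ ℳ n → f x ∈ 𝒩 n)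
    (hsurj : Function.Surjective
      ((Submodule.mkQ (Submodule.restrictScalars k
        ((Ideal.span (Set.range fun n : ℕ => B (n + 1))) • (⊤ : Submodule D N)))).comp
        (f.restrictScalars k)))
    (hinj : ∀ m : M,
      (Submodule.mkQ (Submodule.restrictScalars k
        ((Ideal.span (Set.range fun n : ℕ => B (n + 1))) • (⊤ : Submodule D N)))) (f m) = 0 →
      m ∈ Submodule.restrictScalars k
        ((Ideal.span (Set.range fun n : ℕ => B (n + 1))) • (⊤ : Submodule D M))) :
    Function.Bijective f :=
  stmt6_general k D B hmul M N ℳ 𝒩 hM hN N' e f hf hsurj hinj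
end

section
/- Let p be a prime, k a field of characteristic p, q a power of p, and d_q : D → D the k-linear map d_q(x^[n]) = x^[n-q]. Then d_q is a derivation of D. -/
/-!
In characteristic `p`, with `q = p ^ r`, Frobenius gives `(1 + X) ^ (M + q) = (1 + X) ^ M * (1 + X ^ q)`,
so `C(M + q, n) = C(M, n) + C(M, n - q)`. Comparing coefficients of `x^[M]`, this is precisely the
Leibniz rule for `d_q` on a product `x^[n] x^[m]` with `n + m = M + q`, and bilinearity extends it
from basis pairs to all of `D`.
-/

open Polynomial

theorem Nat.cast_choose_add_expChar_pow {R : Type*} [CommSemiring R] {p : ℕ} [ExpChar R p]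
    (r M n : ℕ) :
    ((M + p ^ r).choose n : R) =
      M.choose n + if n < p ^ r then 0 else (M.choose (n - p ^ r) : R) := by
  have hpow : ((X + 1 : R[X]) ^ (M + p ^ r)) = (X + 1) ^ M + (X + 1) ^ M * X ^ p ^ r := by
    rw [pow_add, add_pow_expChar_pow, one_pow, mul_add, mul_one, add_comm]
  have hcoeff := congrArg (coeff · n) hpow
  simp only [coeff_add, coeff_mul_X_pow', coeff_X_add_one_pow] at hcoeff
  rw [hcoeff]
  split_ifs <;> first | rfl | omega

theorem LinearMap.leibniz_of_basis {ι k D : Type*} [CommSemiring k] [Semiring D] [Algebra k D]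
    (B : Module.Basis ι k D) (d : D →ₗ[k] D)
    (h : ∀ i j, d (B i * B j) = B i * d (B j) + d (B i) * B j) (f g : D) :
    d (f * g) = f * d g + d f * g := by
  have hbilin := LinearMap.ext_basis (B := (LinearMap.mul k D).compr₂ d)
    (B' := (LinearMap.mul k D).compl₂ d + (LinearMap.mul k D).comp d) B B (by simpa using h)
  simpa using LinearMap.congr_fun₂ hbilin f g

theorem shift_leibniz_on_basis {k D : Type*} [CommSemiring k] [Semiring D] [Algebra k D]
    {p : ℕ} [ExpChar k p] (r : ℕ) (B : ℕ → D)
    (hmul : ∀ n m : ℕ, B n * B m = ((n + m).choose n : k) • B (n + m)) (d : D →ₗ[k] D)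
    (hd : ∀ n : ℕ, d (B n) = if n < p ^ r then 0 else B (n - p ^ r)) (n m : ℕ) :
    d (B n * B m) = B n * d (B m) + d (B n) * B m := by
  rcases lt_or_ge (n + m) (p ^ r) with hlt | hge
  · simp [hmul, hd, hlt, show n < p ^ r by omega, show m < p ^ r by omega]
  obtain ⟨M, hM⟩ : ∃ M, n + m = M + p ^ r := ⟨n + m - p ^ r, by omega⟩
  rw [hmul, map_smul, hd, if_neg hge.not_gt, hM, add_tsub_cancel_right,
    Nat.cast_choose_add_expChar_pow, add_smul, hd, hd]
  congr 1
  · split_ifs with hm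
    · rw [mul_zero, Nat.choose_eq_zero_of_lt (by omega), Nat.cast_zero, zero_smul]
    · rw [hmul, show n + (m - p ^ r) = M by omega]
  · split_ifs with hn
    · rw [zero_mul, zero_smul]
    · rw [hmul, show n - p ^ r + m = M by omega]

theorem stmt8_general (p : ℕ) (hp : p.Prime) (k D : Type*) [Field k] [CharP k p]
    [CommRing D] [Algebra k D]
    (B : Module.Basis ℕ k D)
    (hmul : ∀ n m : ℕ, B n * B m = ((n + m).choose n : k) • B (n + m))
    (r : ℕ) (q : ℕ) (hq : q = p ^ r)
    (dq : D →ₗ[k] D)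
    (hdq : ∀ n : ℕ, dq (B n) = if n < q then 0 else B (n - q)) :
    ∀ f g : D, dq (f * g) = f * dq g + dq f * g := by
  subst hq
  have : Fact p.Prime := ⟨hp⟩
  exact dq.leibniz_of_basis B (shift_leibniz_on_basis r B hmul dq hdq)

/-- Let `k` be a field of characteristic `p`, `q = p^r`, and `d_q : D → D` the `k`-linear
map with `d_q (x^[n]) = x^[n-q]` (zero if `n < q`). Then `d_q` is a derivation of the
divided power algebra `D`. -/
theorem stmt8 (p : ℕ) (hp : p.Prime) (k D : Type*) [Field k] [CharP k p]
    [CommRing D] [Algebra k D]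
    (B : Module.Basis ℕ k D) (hone : B 0 = 1)
    (hmul : ∀ n m : ℕ, B n * B m = ((n + m).choose n : k) • B (n + m))
    (r : ℕ) (q : ℕ) (hq : q = p ^ r)
    (dq : D →ₗ[k] D)
    (hdq : ∀ n : ℕ, dq (B n) = if n < q then 0 else B (n - q)) :
    ∀ f g : D, dq (f * g) = f * dq g + dq f * g :=
  stmt8_general p hp k D B hmul r q hq dq hdq
end

section
/- Let k be a field of characteristic p, q = p^r, and D^(q) = ⊕_{q | n} D_n the subalgebra of the divided power algebra D spanned by the x^[qn]. Then the k-linear map D^(q) → D sending x^[qn] to x^[n] is an isomorphism of k-algebras. -/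
/-! The `x^[qn]` form a basis of `D^(q)` whose structure constants are `binom(q(n+m), qn)`, and by
Lucas' theorem these agree in `k` with the structure constants `binom(n+m, n)` of `D`. So matching
the two bases is a linear isomorphism that is multiplicative on basis elements, hence everywhere. -/

open Module

lemma LinearMap.map_mul_of_basis {ι R A B : Type*} [CommSemiring R]
    [NonUnitalNonAssocSemiring A] [Module R A] [SMulCommClass R A A] [IsScalarTower R A A]
    [NonUnitalNonAssocSemiring B] [Module R B] [SMulCommClass R B B] [IsScalarTower R B B]
    (b : Basis ι R A) (f : A →ₗ[R] B) (h : ∀ i j, f (b i * b j) = f (b i) * f (b j))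
    (x y : A) : f (x * y) = f x * f y := by
  have key : (LinearMap.mul R A).compr₂ f = (LinearMap.mul R B).compl₁₂ f f :=
    b.ext fun i => b.ext fun j => h i j
  exact DFunLike.congr_fun (DFunLike.congr_fun key x) y

section DividedPower

variable {k A D : Type*} [CommSemiring k] [Semiring A] [Algebra k A] [Semiring D] [Algebra k D]

/-- `B n` plays the role of `x^[n]`. -/
def IsDividedPowerBasis (B : Basis ℕ k D) : Prop :=
  B 0 = 1 ∧ ∀ n m : ℕ, B n * B m = ((n + m).choose n : k) • B (n + m)

noncomputable def IsDividedPowerBasis.algEquiv {C : Basis ℕ k A} {B : Basis ℕ k D}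
    (hC : IsDividedPowerBasis C) (hB : IsDividedPowerBasis B) : A ≃ₐ[k] D :=
  AlgEquiv.ofLinearEquiv (C.equiv B (Equiv.refl ℕ))
    (by rw [← hC.1, C.equiv_apply, ← hB.1]; rfl)
    (LinearMap.map_mul_of_basis C (C.equiv B (Equiv.refl ℕ)).toLinearMap fun n m => by
      simp only [LinearEquiv.coe_coe, C.equiv_apply, Equiv.refl_apply, hC.2, map_smul, hB.2])

lemma IsDividedPowerBasis.algEquiv_apply {C : Basis ℕ k A} {B : Basis ℕ k D}
    (hC : IsDividedPowerBasis C) (hB : IsDividedPowerBasis B) (n : ℕ) :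
    hC.algEquiv hB (C n) = B n :=
  C.equiv_apply n B (Equiv.refl ℕ)

end DividedPower

lemma Nat.cast_choose_prime_pow_mul {R : Type*} [Ring R] (p : ℕ) [Fact p.Prime] [CharP R p]
    (r a b : ℕ) : ((p ^ r * a).choose (p ^ r * b) : R) = (a.choose b : R) :=
  (CharP.natCast_eq_natCast R p).mpr Choose.choose_pow_mul_pow_mul_modEq_choose_nat

section BasisOfSpan

variable {ι R D : Type*} [CommSemiring R] [Semiring D] [Algebra R D] {v : ι → D}
  (hv : LinearIndependent R v) (S : Subalgebra R D)
  (hS : (S : Set D) = Submodule.span R (Set.range v))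

noncomputable def Subalgebra.basisOfCoeEqSpan : Basis ι R S :=
  (Basis.span hv).map
    (LinearEquiv.ofEq _ (Subalgebra.toSubmodule S) (SetLike.coe_injective hS.symm))

lemma Subalgebra.basisOfCoeEqSpan_apply (i : ι) : (S.basisOfCoeEqSpan hv hS i : D) = v i :=
  congrArg Subtype.val (Basis.span_apply hv i)

end BasisOfSpan

/-- Let `k` be a field of characteristic `p`, `q = p^r`, and `D^(q)` the subalgebra of the
divided power algebra `D` spanned by the `x^[qn]`. Then the `k`-linear map `D^(q) → D`
sending `x^[qn]` to `x^[n]` is an isomorphism of `k`-algebras. -/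
theorem stmt9 (p : ℕ) (hp : p.Prime) (k D : Type*) [Field k] [CharP k p]
    [CommRing D] [Algebra k D]
    (B : Module.Basis ℕ k D) (hone : B 0 = 1)
    (hmul : ∀ n m : ℕ, B n * B m = ((n + m).choose n : k) • B (n + m))
    (r : ℕ) (q : ℕ) (hq : q = p ^ r)
    (S : Subalgebra k D)
    (hS : (S : Set D) = Submodule.span k (Set.range fun n : ℕ => B (q * n))) :
    ∃ ψ : S ≃ₐ[k] D, ∀ (n : ℕ) (h : B (q * n) ∈ S), ψ ⟨B (q * n), h⟩ = B n := by
  have : Fact p.Prime := ⟨hp⟩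
  subst hq
  have hinj : Function.Injective (p ^ r * ·) := mul_right_injective₀ (pow_ne_zero r hp.ne_zero)
  set C := S.basisOfCoeEqSpan (B.linearIndependent.comp _ hinj) hS
  have hC : ∀ n, (C n : D) = B (p ^ r * n) := S.basisOfCoeEqSpan_apply _ hS
  have hB : IsDividedPowerBasis B := ⟨hone, hmul⟩
  have hCdiv : IsDividedPowerBasis C := by
    refine ⟨Subtype.ext ?_, fun n m => Subtype.ext ?_⟩
    · rw [hC, mul_zero, hone, OneMemClass.coe_one]
    · push_cast [hC]
      rw [hmul, ← mul_add, Nat.cast_choose_prime_pow_mul]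
  refine ⟨hCdiv.algEquiv hB, fun n h => ?_⟩
  rw [← hCdiv.algEquiv_apply hB n]
  exact congrArg _ (Subtype.ext (hC n).symm)
end
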